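/- In a Best-of-3 game under Trailing Rule b with A serving first, deliberately losing the first point gives A win probability p^2, while playing honestly gives win probability p(1-q) + pq(1-q) + (1-p)p^2; the former strictly exceeds the latter if and only if p^2 + q^2 > 1. Hence TRb is strategy-vulnerable. -/

import Mathlib

/-- Next server under Trailing Rule b: given the old score `(x, y)` and the new score
`(x', y')`, the player behind serves next; on a tie, the player who was behind
immediately before the tie serves.  `true` = A serves. -/
def nextTRb (x y x' y' : ℕ) : Bool :=
  if x' < y' then true
  else if y' < x' then false
  else if x < y then true else false

/-- Win probability for A in a Best-of-3 game under Trailing Rule b, where `srv = true`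
means A serves the current point; A wins on his serve with probability `p`, B on hers
with probability `q`.  `fuel` bounds the number of points. -/
def winProbTRb (p q : ℝ) : ℕ → ℕ → ℕ → Bool → ℝ
  | 0, _, _, _ => 0
  | fuel + 1, x, y, srv =>
    if 2 ≤ x then 1
    else if 2 ≤ y then 0
    else
      (if srv then p else 1 - q) * winProbTRb p q fuel (x + 1) y (nextTRb x y (x + 1) y) +
        (1 - if srv then p else 1 - q) * winProbTRb p q fuel x (y + 1) (nextTRb x y x (y + 1))

theorem winProbTRb_start (p q : ℝ) :
    winProbTRb p q 4 0 0 true = p * (1 - q) + p * q * (1 - q) + (1 - p) * p ^ 2 := by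
  norm_num [winProbTRb, nextTRb]
  ring

theorem sq_sub_winProbTRb_start (p q : ℝ) :
    p ^ 2 - winProbTRb p q 4 0 0 true = p * (p ^ 2 + q ^ 2 - 1) := by
  rw [winProbTRb_start]
  ring

theorem sq_gt_winProbTRb_start_iff {p : ℝ} (q : ℝ) (hp : 0 < p) :
    p ^ 2 > winProbTRb p q 4 0 0 true ↔ p ^ 2 + q ^ 2 > 1 := by
  rw [gt_iff_lt, ← sub_pos, sq_sub_winProbTRb_start, mul_pos_iff_of_pos_left hp, sub_pos]

theorem TRb_strategy_vulnerable_general (p q : ℝ) (hp0 : 0 < p) :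
    winProbTRb p q 4 0 0 true
        = p * (1 - q) + p * q * (1 - q) + (1 - p) * p ^ 2 ∧
      (p ^ 2 > winProbTRb p q 4 0 0 true ↔ p ^ 2 + q ^ 2 > 1) ∧
      ∃ p' q' : ℝ, 0 < p' ∧ p' < 1 ∧ 0 < q' ∧ q' < 1 ∧
        p' ^ 2 > winProbTRb p' q' 4 0 0 true :=
  ⟨winProbTRb_start p q, sq_gt_winProbTRb_start_iff q hp0,
    9 / 10, 9 / 10, by norm_num, by norm_num, by norm_num, by norm_num,
    (sq_gt_winProbTRb_start_iff _ (by norm_num)).2 (by norm_num)⟩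

/-- In a Best-of-3 game under Trailing Rule b with A serving first: playing honestly,
A wins with probability `p(1-q) + pq(1-q) + (1-p)p²`; by deliberately losing the first
point (after which A serves the next two points, winning the game iff he wins both),
A wins with probability `p²`.  The latter strictly exceeds the former if and only if
`p² + q² > 1`.  Hence TRb is strategy-vulnerable: for some `p, q` deliberately losing
is strictly better. -/
theorem TRb_strategy_vulnerable (p q : ℝ) (hp0 : 0 < p) (hp1 : p < 1)
    (hq0 : 0 < q) (hq1 : q < 1) :
    winProbTRb p q 4 0 0 true
        = p * (1 - q) + p * q * (1 - q) + (1 - p) * p ^ 2 ∧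
      (p ^ 2 > winProbTRb p q 4 0 0 true ↔ p ^ 2 + q ^ 2 > 1) ∧
      ∃ p' q' : ℝ, 0 < p' ∧ p' < 1 ∧ 0 < q' ∧ q' < 1 ∧
        p' ^ 2 > winProbTRb p' q' 4 0 0 true :=
  TRb_strategy_vulnerable_general p q hp0
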